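/- For every k ∈ ℤ: if z ∈ ℂ ∖ (−∞,0] then u_k(z) = Γ(−2iρ) s_k(z) + z^{−2iρ} e^{z} Γ(2iρ) (sin π(ε+1/2+iρ) / |sin π(ε+1/2−iρ)|) t_k(z), and if z ∈ ℂ ∖ [0,∞) then v_k(z) = (−z)^{2iρ} e^{−z} Γ(−2iρ) (sin π(ε+1/2+iρ) / |sin π(ε+1/2−iρ)|) s_k(z) + Γ(2iρ) t_k(z), where all complex powers are principal branches. -/

import Mathlib

/-!
Kummer's transformation `₁F₁(a; b; z) = eᶻ ₁F₁(b - a; b; -z)` (a Cauchy product with the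
exponential series, whose coefficients agree by the Chu–Vandermonde identity) turns the second
summand of `U(a; b; z)` into `z^(1-b) eᶻ Γ(b-1)/Γ(a) ₁F₁(1 - a; 2 - b; -z)`. Both connection
formulas are then identities between the phases `|Γ(w)|/Γ(w)` and `|Γ(1-w)|/Γ(1-w̄)` for
`w = k + ε + 1/2 + iρ`. These come from the reflection formula `Γ(w) Γ(1-w) = π / sin πw`:
`G H = π / S` forces `|G|/G = (S/|S|) |H|/H̄`, and `sin π(k + p) = (-1)^k sin πp`.
-/

open Complex MeasureTheory

noncomputable section

/-- Pochhammer symbol `(a)_n`. -/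
def poch (a : ℂ) (n : ℕ) : ℂ := ∏ i ∈ Finset.range n, (a + i)

/-- Confluent hypergeometric function `₁F₁(a;b;z)`. -/
def hyp1F1 (a b z : ℂ) : ℂ := ∑' n : ℕ, poch a n * z ^ n / (poch b n * (n.factorial : ℂ))

/-- Second solution `U(a;b;z)` of the confluent hypergeometric equation (principal branch). -/
def USol (a b z : ℂ) : ℂ :=
  Complex.Gamma (1 - b) / Complex.Gamma (a - b + 1) * hyp1F1 a b z
  + Complex.Gamma (b - 1) / Complex.Gamma a * z ^ (1 - b) * hyp1F1 (a - b + 1) (2 - b) z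

/-- `a_k = |k + ε + 1/2 + iρ|`. -/
def coefA (ρ ε : ℝ) (k : ℤ) : ℝ := norm ((k : ℂ) + (ε : ℂ) + 1/2 + I * (ρ : ℂ))

/-- `b_k = 2(k + ε)`. -/
def coefB (ρ ε : ℝ) (k : ℤ) : ℝ := 2 * ((k : ℝ) + ε)

/-- The solution `s_k(z)`. -/
def sSol (ρ ε : ℝ) (k : ℤ) (z : ℂ) : ℂ :=
  (-1 : ℂ) ^ k * ((norm (Complex.Gamma ((k : ℂ) + (ε : ℂ) + 1/2 + I * ρ)) : ℂ) /
      Complex.Gamma ((k : ℂ) + (ε : ℂ) + 1/2 - I * ρ)) *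
    hyp1F1 ((k : ℂ) + (ε : ℂ) + 1/2 + I * ρ) (1 + 2 * I * ρ) z

/-- The solution `t_k(z)`. -/
def tSol (ρ ε : ℝ) (k : ℤ) (z : ℂ) : ℂ :=
  ((norm (Complex.Gamma (1/2 - (k : ℂ) - (ε : ℂ) - I * ρ)) : ℂ) /
      Complex.Gamma (1/2 - (k : ℂ) - (ε : ℂ) + I * ρ)) *
    hyp1F1 (1/2 - (k : ℂ) - (ε : ℂ) - I * ρ) (1 - 2 * I * ρ) (-z)

/-- The solution `u_k(z)`, for `z ∉ (-∞,0]`. -/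
def uSol (ρ ε : ℝ) (k : ℤ) (z : ℂ) : ℂ :=
  (-1 : ℂ) ^ k * (norm (Complex.Gamma ((k : ℂ) + (ε : ℂ) + 1/2 + I * ρ)) : ℂ) *
    USol ((k : ℂ) + (ε : ℂ) + 1/2 + I * ρ) (1 + 2 * I * ρ) z

/-- The solution `v_k(z)`, for `z ∉ [0,∞)`. -/
def vSol (ρ ε : ℝ) (k : ℤ) (z : ℂ) : ℂ :=
  (norm (Complex.Gamma (1/2 - (k : ℂ) - (ε : ℂ) - I * ρ)) : ℂ) *
    USol (1/2 - (k : ℂ) - (ε : ℂ) - I * ρ) (1 - 2 * I * ρ) (-z)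

open Finset Filter ComplexConjugate
open scoped Real Topology

lemma poch_eq_ascPochhammer_eval (a : ℂ) (n : ℕ) : poch a n = (ascPochhammer ℂ n).eval a := by
  induction n with
  | zero => simp [poch]
  | succ n ih => rw [poch, prod_range_succ, ← poch, ih, ascPochhammer_succ_right]; simp

lemma descPochhammer_smeval_eq_poch (r : ℂ) (n : ℕ) :
    (descPochhammer ℤ n).smeval r = poch (r - n + 1) n := by
  rw [Polynomial.descPochhammer_smeval_eq_ascPochhammer, Polynomial.ascPochhammer_smeval_eq_eval,
    poch_eq_ascPochhammer_eval]

lemma poch_neg (a : ℂ) (n : ℕ) : poch (-a) n = (-1) ^ n * poch (a - n + 1) n := by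
  rw [poch_eq_ascPochhammer_eval, ascPochhammer_eval_neg_eq_descPochhammer,
    descPochhammer_eval_eq_ascPochhammer, poch_eq_ascPochhammer_eval]

lemma poch_ne_zero {b : ℂ} (hb : ∀ n : ℕ, b + n ≠ 0) (n : ℕ) : poch b n ≠ 0 :=
  prod_ne_zero_iff.mpr fun i _ => hb i

lemma poch_add (a : ℂ) (m n : ℕ) : poch a (m + n) = poch a m * poch (a + m) n := by
  simp only [poch, prod_range_add, Nat.cast_add, add_assoc]

-- Chu–Vandermonde for falling factorials at `a - b` and `b + n - 1`.
theorem poch_eq_sum_antidiagonal (a b : ℂ) (n : ℕ) :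
    poch a n = ∑ ij ∈ antidiagonal n,
      (n.choose ij.1 : ℂ) * ((-1) ^ ij.1 * poch (b - a) ij.1 * poch (b + ij.1) ij.2) := by
  have h := Ring.descPochhammer_smeval_add (r := a - b) (s := b + n - 1) n (Commute.all _ _)
  rw [descPochhammer_smeval_eq_poch] at h
  convert h using 2 with ij hij
  · ring_nf
  · obtain ⟨i, j⟩ := ij
    rw [HasAntidiagonal.mem_antidiagonal] at hij
    subst hij
    rw [descPochhammer_smeval_eq_poch, descPochhammer_smeval_eq_poch, ← neg_sub, poch_neg]
    push_cast
    ring_nf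
    simp [pow_mul']

def hyp1F1Term (a b z : ℂ) (n : ℕ) : ℂ := poch a n * z ^ n / (poch b n * n.factorial)

lemma hyp1F1_eq_tsum (a b z : ℂ) : hyp1F1 a b z = ∑' n, hyp1F1Term a b z n := rfl

lemma hyp1F1Term_succ (a : ℂ) {b : ℂ} (hb : ∀ n : ℕ, b + n ≠ 0) (z : ℂ) (n : ℕ) :
    hyp1F1Term a b z (n + 1) =
      hyp1F1Term a b z n * ((a + n) / (b + n) * (z * (1 / (n + 1)))) := by
  have := poch_ne_zero hb n
  have := hb n
  simp only [hyp1F1Term, poch, prod_range_succ, pow_succ, Nat.factorial_succ]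
  rw [← poch, ← poch]
  push_cast
  field_simp

lemma summable_norm_hyp1F1Term (a : ℂ) {b : ℂ} (hb : ∀ n : ℕ, b + n ≠ 0) (z : ℂ) :
    Summable fun n => ‖hyp1F1Term a b z n‖ := by
  have hratio : Tendsto (fun n : ℕ => (a + n) / (b + n) * (z * (1 / (n + 1)))) atTop (𝓝 0) := by
    have h := (tendsto_add_mul_div_add_mul_atTop_nhds a b 1 one_ne_zero).mul
      (tendsto_one_div_add_atTop_nhds_zero_nat.const_mul z)
    simpa using h
  refine summable_of_ratio_norm_eventually_le (r := 1 / 2) (by norm_num) ?_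
  have hsmall := hratio.norm.eventually (ge_mem_nhds (show ‖(0 : ℂ)‖ < 1 / 2 by norm_num))
  filter_upwards [hsmall] with n hn
  rw [norm_norm, norm_norm, hyp1F1Term_succ a hb, norm_mul, mul_comm (1 / 2)]
  exact mul_le_mul_of_nonneg_left hn (norm_nonneg _)

lemma sum_antidiagonal_hyp1F1Term_mul_exp (a : ℂ) {b : ℂ} (hb : ∀ n : ℕ, b + n ≠ 0) (z : ℂ)
    (n : ℕ) :
    ∑ ij ∈ antidiagonal n, hyp1F1Term (b - a) b (-z) ij.1 * (z ^ ij.2 / ij.2.factorial) =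
      hyp1F1Term a b z n := by
  rw [hyp1F1Term, poch_eq_sum_antidiagonal a b n, sum_mul, sum_div]
  refine sum_congr rfl fun ⟨i, j⟩ hij => ?_
  rw [HasAntidiagonal.mem_antidiagonal] at hij
  subst hij
  have := poch_ne_zero hb i
  have : poch (b + i) j ≠ 0 := poch_ne_zero (fun m => by simpa [add_assoc] using hb (i + m)) j
  have := Nat.factorial_ne_zero i
  have := Nat.factorial_ne_zero j
  have := (Nat.choose_pos (Nat.le_add_left j i)).ne'
  rw [hyp1F1Term, poch_add, ← Nat.add_choose_mul_factorial_mul_factorial i j, Nat.choose_symm_add,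
    neg_pow, pow_add]
  push_cast
  field_simp

theorem hyp1F1_eq_exp_mul (a : ℂ) {b : ℂ} (hb : ∀ n : ℕ, b + n ≠ 0) (z : ℂ) :
    hyp1F1 a b z = exp z * hyp1F1 (b - a) b (-z) := by
  rw [Complex.exp_eq_exp_ℂ, NormedSpace.exp_eq_tsum_div, mul_comm, hyp1F1_eq_tsum,
    hyp1F1_eq_tsum, tsum_mul_tsum_eq_tsum_sum_antidiagonal_of_summable_norm
      (summable_norm_hyp1F1Term _ hb _) (NormedSpace.norm_expSeries_div_summable z)]
  exact tsum_congr fun n => (sum_antidiagonal_hyp1F1Term_mul_exp a hb z n).symm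

lemma sin_pi_mul_intCast_add (k : ℤ) (p : ℂ) :
    sin (π * (k + p)) = (-1) ^ k * sin (π * p) := by
  rw [mul_add, add_comm, mul_comm _ (k : ℂ), Complex.sin_antiperiodic.add_int_mul_eq,
    Int.cast_negOnePow]

lemma norm_div_self_eq_of_mul_eq_div {G H S : ℂ} {c : ℝ} (hc : 0 < c) (hS : S ≠ 0)
    (h : G * H = c / S) : ‖G‖ / G = S / ‖S‖ * (‖H‖ / conj H) := by
  have hc' : (c : ℂ) ≠ 0 := by exact_mod_cast hc.ne'
  have hG : G ≠ 0 := by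
    rintro rfl
    exact div_ne_zero hc' hS (by simpa using h.symm)
  have hH : H = c / (S * G) := by
    rw [eq_div_iff (mul_ne_zero hS hG)]
    rw [eq_div_iff hS] at h
    linear_combination h
  have hGn : (‖G‖ : ℂ) ≠ 0 := by simpa using hG
  have hSn : (‖S‖ : ℂ) ≠ 0 := by simpa using hS
  have hGc : conj G ≠ 0 := by simpa using hG
  have hSc : conj S ≠ 0 := by simpa using hS
  subst hH
  simp only [map_div₀, map_mul, Complex.conj_ofReal, norm_div, norm_mul, Complex.norm_real,
    Real.norm_of_nonneg hc.le]
  push_cast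
  field_simp
  linear_combination -((‖S‖ : ℂ) ^ 2 * Complex.mul_conj' G + G * conj G * Complex.mul_conj' S)

lemma norm_sin_pi_mul_conj (p : ℂ) : ‖sin (π * conj p)‖ = ‖sin (π * p)‖ := by
  rw [show (π : ℂ) * conj p = conj (π * p) by simp, Complex.sin_conj, Complex.norm_conj]

lemma sin_pi_mul_intCast_add_ne_zero (k : ℤ) {p : ℂ} (hp : sin (π * p) ≠ 0) :
    sin (π * (k + p)) ≠ 0 := by
  rw [sin_pi_mul_intCast_add]
  exact mul_ne_zero (zpow_ne_zero _ (by norm_num)) hp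

lemma neg_one_zpow_mul_norm_Gamma_div (k : ℤ) {p : ℂ} (hp : sin (π * p) ≠ 0) :
    (-1) ^ k * ‖Gamma (k + p)‖ / Gamma (k + p) =
      sin (π * p) / ‖sin (π * conj p)‖ *
        (‖Gamma (1 - (k + p))‖ / Gamma (1 - conj (k + p))) := by
  have hk : ((-1 : ℂ) ^ k) ^ 2 = 1 := by
    rw [← zpow_natCast, ← zpow_mul, mul_comm, zpow_mul]; norm_num
  have h := norm_div_self_eq_of_mul_eq_div Real.pi_pos (sin_pi_mul_intCast_add_ne_zero k hp)
    (Complex.Gamma_mul_Gamma_one_sub (k + p))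
  rw [sin_pi_mul_intCast_add, norm_mul, norm_zpow, norm_neg, norm_one, one_zpow, one_mul,
    ← Complex.Gamma_conj, map_sub, map_one] at h
  rw [norm_sin_pi_mul_conj]
  linear_combination (-1) ^ k * h + sin (π * p) / ‖sin (π * p)‖ *
    (‖Gamma (1 - (k + p))‖ / Gamma (1 - conj (k + p))) * hk

lemma norm_Gamma_one_sub_div (k : ℤ) {p : ℂ} (hp : sin (π * p) ≠ 0) :
    ‖Gamma (1 - (k + p))‖ / Gamma (1 - (k + p)) =
      sin (π * p) / ‖sin (π * conj p)‖ *
        ((-1) ^ k * ‖Gamma (k + p)‖ / Gamma (conj (k + p))) := by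
  have h := norm_div_self_eq_of_mul_eq_div Real.pi_pos (sin_pi_mul_intCast_add_ne_zero k hp)
    ((mul_comm _ _).trans (Complex.Gamma_mul_Gamma_one_sub (k + p)))
  rw [sin_pi_mul_intCast_add, norm_mul, norm_zpow, norm_neg, norm_one, one_zpow, one_mul,
    ← Complex.Gamma_conj] at h
  rw [norm_sin_pi_mul_conj, h]
  ring

theorem mul_norm_Gamma_mul_USol_eq {a b m φ : ℂ} (hb : ∀ n : ℕ, 2 - b + n ≠ 0)
    (hφ : m * ‖Gamma a‖ / Gamma a = φ * (‖Gamma (1 - a)‖ / Gamma (b - a))) (z : ℂ) :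
    m * ‖Gamma a‖ * USol a b z =
      Gamma (1 - b) * (m * (‖Gamma a‖ / Gamma (a - b + 1)) * hyp1F1 a b z) +
      z ^ (1 - b) * exp z * Gamma (b - 1) * φ *
        (‖Gamma (1 - a)‖ / Gamma (b - a) * hyp1F1 (1 - a) (2 - b) (-z)) := by
  rw [USol, hyp1F1_eq_exp_mul _ hb, show 2 - b - (a - b + 1) = 1 - a by ring]
  linear_combination
    Gamma (b - 1) * z ^ (1 - b) * exp z * hyp1F1 (1 - a) (2 - b) (-z) * hφ

lemma add_natCast_ne_zero_of_im_ne_zero {b : ℂ} (hb : b.im ≠ 0) (n : ℕ) : b + n ≠ 0 :=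
  fun h => hb (by simpa using congrArg Complex.im h)

lemma sin_pi_mul_ne_zero_of_im_ne_zero {p : ℂ} (hp : p.im ≠ 0) : sin (π * p) ≠ 0 := by
  rw [Ne, Complex.sin_eq_zero_iff]
  rintro ⟨n, hn⟩
  exact hp (by simpa [Real.pi_ne_zero] using congrArg Complex.im hn)

theorem laguerre_connection_u_v_general (ρ ε : ℝ) (hρ : 0 < ρ)
    (z : ℂ) (k : ℤ) :
    (¬(z.im = 0 ∧ z.re ≤ 0) →
      uSol ρ ε k z =
        Complex.Gamma (-2 * I * ρ) * sSol ρ ε k z +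
        z ^ (-2 * I * (ρ : ℂ)) * Complex.exp z * Complex.Gamma (2 * I * ρ) *
          (Complex.sin ((Real.pi : ℂ) * ((ε : ℂ) + 1/2 + I * ρ)) /
            (norm (Complex.sin ((Real.pi : ℂ) * ((ε : ℂ) + 1/2 - I * ρ))) : ℂ)) *
          tSol ρ ε k z) ∧
    (¬(z.im = 0 ∧ 0 ≤ z.re) →
      vSol ρ ε k z =
        (-z) ^ (2 * I * (ρ : ℂ)) * Complex.exp (-z) * Complex.Gamma (-2 * I * ρ) *
          (Complex.sin ((Real.pi : ℂ) * ((ε : ℂ) + 1/2 + I * ρ)) /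
            (norm (Complex.sin ((Real.pi : ℂ) * ((ε : ℂ) + 1/2 - I * ρ))) : ℂ)) *
          sSol ρ ε k z +
        Complex.Gamma (2 * I * ρ) * tSol ρ ε k z) := by
  have hsin : sin (π * (ε + 1 / 2 + I * ρ)) ≠ 0 :=
    sin_pi_mul_ne_zero_of_im_ne_zero (by simpa using hρ.ne')
  have hu := neg_one_zpow_mul_norm_Gamma_div k hsin
  have hv := norm_Gamma_one_sub_div k hsin
  simp only [map_add, map_mul, map_one, map_div₀, map_ofNat, map_intCast,
    Complex.conj_ofReal, Complex.conj_I] at hu hv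
  refine ⟨fun _ => ?_, fun _ => ?_⟩
  · have hb : ∀ n : ℕ, 2 - (1 + 2 * I * ρ) + n ≠ 0 :=
      add_natCast_ne_zero_of_im_ne_zero (by simpa using hρ.ne')
    have h := mul_norm_Gamma_mul_USol_eq (a := k + ε + 1 / 2 + I * ρ) (m := (-1) ^ k)
      (φ := sin (π * (ε + 1 / 2 + I * ρ)) / ‖sin (π * (ε + 1 / 2 - I * ρ))‖)
      hb (by linear_combination (norm := ring_nf) hu) z
    rw [uSol, h, sSol, tSol]
    ring_nf
  · have hb : ∀ n : ℕ, 2 - (1 - 2 * I * ρ) + n ≠ 0 :=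
      add_natCast_ne_zero_of_im_ne_zero (by simpa using hρ.ne')
    have h := mul_norm_Gamma_mul_USol_eq (a := 1 / 2 - k - ε - I * ρ) (m := 1)
      (φ := sin (π * (ε + 1 / 2 + I * ρ)) / ‖sin (π * (ε + 1 / 2 - I * ρ))‖ * (-1) ^ k)
      hb (by linear_combination (norm := ring_nf) hv) (-z)
    rw [vSol, ← one_mul (‖_‖ : ℂ), h, sSol, tSol]
    ring_nf

/-- connection formulas expressing `u_k(z)` and `v_k(z)` in terms of
`s_k(z)` and `t_k(z)`. -/
theorem laguerre_connection_u_v (ρ ε : ℝ) (hρ : 0 < ρ) (hε : ε ∈ Set.Ico (0 : ℝ) 1)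
    (z : ℂ) (k : ℤ) :
    (¬(z.im = 0 ∧ z.re ≤ 0) →
      uSol ρ ε k z =
        Complex.Gamma (-2 * I * ρ) * sSol ρ ε k z +
        z ^ (-2 * I * (ρ : ℂ)) * Complex.exp z * Complex.Gamma (2 * I * ρ) *
          (Complex.sin ((Real.pi : ℂ) * ((ε : ℂ) + 1/2 + I * ρ)) /
            (norm (Complex.sin ((Real.pi : ℂ) * ((ε : ℂ) + 1/2 - I * ρ))) : ℂ)) *
          tSol ρ ε k z) ∧
    (¬(z.im = 0 ∧ 0 ≤ z.re) →
      vSol ρ ε k z =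
        (-z) ^ (2 * I * (ρ : ℂ)) * Complex.exp (-z) * Complex.Gamma (-2 * I * ρ) *
          (Complex.sin ((Real.pi : ℂ) * ((ε : ℂ) + 1/2 + I * ρ)) /
            (norm (Complex.sin ((Real.pi : ℂ) * ((ε : ℂ) + 1/2 - I * ρ))) : ℂ)) *
          sSol ρ ε k z +
        Complex.Gamma (2 * I * ρ) * tSol ρ ε k z) :=
  laguerre_connection_u_v_general ρ ε hρ z k
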